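/- arXiv:2404.13608 — 3 statements merged into one kernel-verified Lean document; each statement's English description precedes it below -/
import Mathlib

section
/- In an orthomodular lattice, for every element a, the map b ↦ a ⊓ₛ b is left adjoint to the map c ↦ a ⇝ₛ c; that is, for all a, b, c: a ⊓ (aᶜ ⊔ b) ≤ c if and only if b ≤ aᶜ ⊔ (a ⊓ c). -/
/-!
The adjunction is assembled from its unit and counit. The unit `b ≤ aᶜ ⊔ (a ⊓ (aᶜ ⊔ b))` is the
orthomodular law applied to `aᶜ ≤ aᶜ ⊔ b`; the counit `a ⊓ (aᶜ ⊔ (a ⊓ c)) = a ⊓ c ≤ c` is its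
De Morgan dual applied to `a ⊓ c ≤ a`.
-/

/-- An orthomodular lattice: a bounded lattice with an orthocomplementation
satisfying involution, order-reversal, complementation laws, and the
orthomodular law. -/
class OrthomodularLattice (α : Type*) extends Lattice α, BoundedOrder α, Compl α where
  compl_compl : ∀ a : α, aᶜᶜ = a
  compl_le_compl : ∀ a b : α, a ≤ b → bᶜ ≤ aᶜ
  inf_compl_eq_bot : ∀ a : α, a ⊓ aᶜ = ⊥
  sup_compl_eq_top : ∀ a : α, a ⊔ aᶜ = ⊤
  orthomodular : ∀ a b : α, a ≤ b → a ⊔ (aᶜ ⊓ b) = b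

namespace OrthomodularLattice

variable {α : Type*} [OrthomodularLattice α]

theorem le_compl_comm {a b : α} : a ≤ bᶜ ↔ b ≤ aᶜ :=
  ⟨fun h => by simpa only [compl_compl] using compl_le_compl _ _ h,
    fun h => by simpa only [compl_compl] using compl_le_compl _ _ h⟩

theorem compl_sup (a b : α) : (a ⊔ b)ᶜ = aᶜ ⊓ bᶜ := by
  refine le_antisymm (le_inf (compl_le_compl _ _ le_sup_left) (compl_le_compl _ _ le_sup_right)) ?_
  exact le_compl_comm.mp (sup_le (le_compl_comm.mp inf_le_left) (le_compl_comm.mp inf_le_right))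

theorem compl_inf (a b : α) : (a ⊓ b)ᶜ = aᶜ ⊔ bᶜ := by
  rw [← compl_compl (aᶜ ⊔ bᶜ), compl_sup, compl_compl, compl_compl]

theorem inf_compl_sup_of_le {a b : α} (h : a ≤ b) : b ⊓ (bᶜ ⊔ a) = a := by
  have dual := congrArg compl (orthomodular bᶜ aᶜ (compl_le_compl _ _ h))
  simpa only [compl_sup, compl_inf, compl_compl] using dual

def sasakiProj (a b : α) : α := a ⊓ (aᶜ ⊔ b)

def sasakiHook (a c : α) : α := aᶜ ⊔ (a ⊓ c)

theorem sasakiProj_mono (a : α) : Monotone (sasakiProj a) :=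
  fun _ _ h => inf_le_inf_left a (sup_le_sup_left h aᶜ)

theorem sasakiHook_mono (a : α) : Monotone (sasakiHook a) :=
  fun _ _ h => sup_le_sup_left (inf_le_inf_left a h) aᶜ

theorem le_sasakiHook_sasakiProj (a b : α) : b ≤ sasakiHook a (sasakiProj a b) := by
  have unit : aᶜ ⊔ (a ⊓ (aᶜ ⊔ b)) = aᶜ ⊔ b := by
    simpa only [compl_compl] using orthomodular aᶜ (aᶜ ⊔ b) le_sup_left
  rw [sasakiHook, sasakiProj, inf_left_idem, unit]
  exact le_sup_right

theorem sasakiProj_sasakiHook (a c : α) : sasakiProj a (sasakiHook a c) = a ⊓ c := by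
  rw [sasakiProj, sasakiHook, sup_left_idem]
  exact inf_compl_sup_of_le inf_le_left

theorem gc_sasakiProj_sasakiHook (a : α) : GaloisConnection (sasakiProj a) (sasakiHook a) :=
  GaloisConnection.monotone_intro (sasakiHook_mono a) (sasakiProj_mono a)
    (le_sasakiHook_sasakiProj a) (fun c => (sasakiProj_sasakiHook a c).trans_le inf_le_right)

end OrthomodularLattice

/-- The Sasaki projection `b ↦ a ⊓ₛ b` is left adjoint to the Sasaki hook
`c ↦ a ⇝ₛ c`. -/
theorem sasaki_adjunction {α : Type*} [OrthomodularLattice α] (a b c : α) :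
    a ⊓ (aᶜ ⊔ b) ≤ c ↔ b ≤ aᶜ ⊔ (a ⊓ c) :=
  OrthomodularLattice.gc_sasakiProj_sasakiHook a b c
end

section
/- Let L be an orthomodular lattice and let V ⊆ L be a Boolean subalgebra (a subalgebra of L that is a distributive, hence Boolean, bounded sublattice closed under ᶜ). For an element p ∈ L, define the inner daseinisation δⁱ(p) := ⨆ {q ∈ V | q ≤ p} and the outer daseinisation of pᶜ as δᵒ(pᶜ) := ⨅ {q ∈ V | pᶜ ≤ q}, assuming both exist in V. Then δⁱ(p) ⊓ δᵒ(pᶜ) = 0 and δⁱ(p) ⊔ δᵒ(pᶜ) = 1, i.e., δⁱ(p) and δᵒ(pᶜ) are complements of each other in V. -/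
/-!
Orthocomplementation is an order-reversing involution that maps `V` onto itself, so it carries
the greatest element of `V` below `p` to the least element of `V` above `pᶜ`. Hence
`δᵒ(pᶜ) = δⁱ(p)ᶜ`, and the claim is `a ⊓ aᶜ = ⊥`, `a ⊔ aᶜ = ⊤` for `a = δⁱ(p)`.
-/

namespace OrthomodularLattice

variable {α : Type*} [OrthomodularLattice α]

theorem compl_le_comm {a b : α} : aᶜ ≤ b ↔ bᶜ ≤ a := by
  constructor <;> intro h
  · simpa only [compl_compl] using compl_le_compl _ _ h
  · simpa only [compl_compl] using compl_le_compl _ _ h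

theorem isLeast_compl_of_isGreatest {V : Set α} (hcompl : ∀ a ∈ V, aᶜ ∈ V) {p d : α}
    (hd : IsGreatest {q | q ∈ V ∧ q ≤ p} d) : IsLeast {q | q ∈ V ∧ pᶜ ≤ q} dᶜ := by
  obtain ⟨⟨hdV, hdp⟩, hd_ub⟩ := hd
  refine ⟨⟨hcompl d hdV, compl_le_compl d p hdp⟩, fun q ⟨hqV, hpq⟩ => ?_⟩
  exact compl_le_comm.mpr (hd_ub ⟨hcompl q hqV, compl_le_comm.mp hpq⟩)

end OrthomodularLattice

theorem daseinisation_compl_general {α : Type*} [OrthomodularLattice α]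
    (V : Set α)
    (hcompl : ∀ a ∈ V, aᶜ ∈ V)
    (p di do' : α)
    -- di is the supremum in V of {q ∈ V | q ≤ p} (inner daseinisation of p)
    (hdiV : di ∈ V) (hdi_le : di ≤ p)
    (hdi_lub : ∀ q ∈ V, q ≤ p → q ≤ di)
    -- do' is the infimum in V of {q ∈ V | pᶜ ≤ q} (outer daseinisation of pᶜ)
    (hdoV : do' ∈ V) (hdo_ge : pᶜ ≤ do')
    (hdo_glb : ∀ q ∈ V, pᶜ ≤ q → do' ≤ q) :
    di ⊓ do' = ⊥ ∧ di ⊔ do' = ⊤ := by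
  have hdo : IsLeast {q | q ∈ V ∧ pᶜ ≤ q} do' :=
    ⟨⟨hdoV, hdo_ge⟩, fun q hq => hdo_glb q hq.1 hq.2⟩
  have hdi : IsGreatest {q | q ∈ V ∧ q ≤ p} di :=
    ⟨⟨hdiV, hdi_le⟩, fun q hq => hdi_lub q hq.1 hq.2⟩
  obtain rfl : do' = diᶜ := hdo.unique (OrthomodularLattice.isLeast_compl_of_isGreatest hcompl hdi)
  exact ⟨OrthomodularLattice.inf_compl_eq_bot di, OrthomodularLattice.sup_compl_eq_top di⟩

/-- In an orthomodular lattice `L` with a Boolean subalgebra `V`, the inner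
daseinisation of `p` and the outer daseinisation of `pᶜ` are complements of
each other in `V`. -/
theorem daseinisation_compl {α : Type*} [OrthomodularLattice α]
    (V : Set α)
    (hbot : ⊥ ∈ V) (htop : ⊤ ∈ V)
    (hinf : ∀ a ∈ V, ∀ b ∈ V, a ⊓ b ∈ V)
    (hsup : ∀ a ∈ V, ∀ b ∈ V, a ⊔ b ∈ V)
    (hcompl : ∀ a ∈ V, aᶜ ∈ V)
    (hdistrib : ∀ a ∈ V, ∀ b ∈ V, ∀ c ∈ V, a ⊓ (b ⊔ c) = (a ⊓ b) ⊔ (a ⊓ c))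
    (p di do' : α)
    -- di is the supremum in V of {q ∈ V | q ≤ p} (inner daseinisation of p)
    (hdiV : di ∈ V) (hdi_le : di ≤ p)
    (hdi_lub : ∀ q ∈ V, q ≤ p → q ≤ di)
    -- do' is the infimum in V of {q ∈ V | pᶜ ≤ q} (outer daseinisation of pᶜ)
    (hdoV : do' ∈ V) (hdo_ge : pᶜ ≤ do')
    (hdo_glb : ∀ q ∈ V, pᶜ ≤ q → do' ≤ q) :
    di ⊓ do' = ⊥ ∧ di ⊔ do' = ⊤ :=
  daseinisation_compl_general V hcompl p di do' hdiV hdi_le hdi_lub hdoV hdo_ge hdo_glb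
end

section
/- In an orthomodular lattice, for all a, b, c: a ⊓ₛ b ≤ c if and only if b ≤ a ⇝ₛ c, and consequently the operator b ↦ a ⊓ₛ b preserves arbitrary existing joins. -/
/-- A complete orthomodular lattice. -/
class CompleteOrthomodularLattice (α : Type*) extends CompleteLattice α, Compl α where
  compl_compl : ∀ a : α, aᶜᶜ = a
  compl_le_compl : ∀ a b : α, a ≤ b → bᶜ ≤ aᶜ
  inf_compl_eq_bot : ∀ a : α, a ⊓ aᶜ = ⊥
  sup_compl_eq_top : ∀ a : α, a ⊔ aᶜ = ⊤
  orthomodular : ∀ a b : α, a ≤ b → a ⊔ (aᶜ ⊓ b) = b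

namespace CompleteOrthomodularLattice

variable {α : Type*} [CompleteOrthomodularLattice α]

lemma le_compl_iff {a b : α} : a ≤ bᶜ ↔ b ≤ aᶜ := by
  constructor <;> intro h
  · have := compl_le_compl _ _ h
    rwa [compl_compl] at this
  · have := compl_le_compl _ _ h
    rwa [compl_compl] at this

lemma compl_sup (a b : α) : (a ⊔ b)ᶜ = aᶜ ⊓ bᶜ := by
  apply le_antisymm
  · exact le_inf (compl_le_compl _ _ le_sup_left) (compl_le_compl _ _ le_sup_right)
  · rw [le_compl_iff]
    exact sup_le (le_compl_iff.mp inf_le_left) (le_compl_iff.mp inf_le_right)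

lemma compl_inf (a b : α) : (a ⊓ b)ᶜ = aᶜ ⊔ bᶜ := by
  have := compl_sup aᶜ bᶜ
  rw [compl_compl, compl_compl] at this
  rw [← this, compl_compl]

/-- dual orthomodular: if `x ≤ a` then `a ⊓ (aᶜ ⊔ x) = x`. -/
lemma inf_sup_compl {a x : α} (h : x ≤ a) : a ⊓ (aᶜ ⊔ x) = x := by
  have h' : aᶜ ≤ xᶜ := compl_le_compl _ _ h
  have := orthomodular _ _ h'
  rw [compl_compl] at this
  have := congrArg Compl.compl this
  simp only [compl_sup, compl_inf, compl_compl] at this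
  exact this

lemma adj (a b c : α) : a ⊓ (aᶜ ⊔ b) ≤ c ↔ b ≤ aᶜ ⊔ (a ⊓ c) := by
  constructor
  · intro h
    have h1 : aᶜ ⊔ (a ⊓ (aᶜ ⊔ b)) = aᶜ ⊔ b := by
      have := orthomodular aᶜ (aᶜ ⊔ b) le_sup_left
      rwa [compl_compl] at this
    calc b ≤ aᶜ ⊔ b := le_sup_right
      _ = aᶜ ⊔ (a ⊓ (aᶜ ⊔ b)) := h1.symm
      _ ≤ aᶜ ⊔ (a ⊓ c) := sup_le_sup_left (le_inf inf_le_left h) _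
  · intro h
    calc a ⊓ (aᶜ ⊔ b) ≤ a ⊓ (aᶜ ⊔ (a ⊓ c)) := by
          exact inf_le_inf_left _ (sup_le le_sup_left h)
      _ = a ⊓ c := inf_sup_compl inf_le_left
      _ ≤ c := inf_le_right

end CompleteOrthomodularLattice

/-- The Sasaki adjunction, and consequently the Sasaki projection
`b ↦ a ⊓ₛ b` preserves arbitrary joins. -/
theorem sasaki_adjunction_and_joins {α : Type*} [CompleteOrthomodularLattice α] :
    (∀ a b c : α, a ⊓ (aᶜ ⊔ b) ≤ c ↔ b ≤ aᶜ ⊔ (a ⊓ c)) ∧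
    (∀ (a : α) (S : Set α),
      a ⊓ (aᶜ ⊔ sSup S) = ⨆ b ∈ S, a ⊓ (aᶜ ⊔ b)) := by
  open CompleteOrthomodularLattice in
  refine ⟨adj, fun a S => le_antisymm ?_ ?_⟩
  · rw [adj]
    apply sSup_le
    intro b hb
    rw [← adj]
    exact le_biSup (fun b => a ⊓ (aᶜ ⊔ b)) hb
  · exact iSup_le fun b => iSup_le fun hb =>
      inf_le_inf_left _ (sup_le_sup_left (le_sSup hb) _)
end
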